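/- arXiv:2008.08718 — 2 statements merged into one kernel-verified Lean document; each statement's English description precedes it below -/
import Mathlib

section
/- For every dimension d ≥ 1 there exists a constant γ_d > 0 depending only on d with the following property: for every k ≥ 1, every n ≥ 1, and every collection of points x_1,…,x_n, x ∈ ℝ^d such that all pairwise Euclidean distances among the points of {x_1,…,x_n, x} are distinct (no ties), the number of indices i ∈ {1,…,n} for which x is among the k nearest neighbors of x_i in the set {x_1,…,x_{i−1}, x, x_{i+1},…,x_n} is at most γ_d·k. -/
open MeasureTheory ProbabilityTheory Finset Matrix

noncomputable section

/-- Empirical (1/n)-normalized squared norm: `‖v‖_n² = (1/n) ∑ᵢ vᵢ²`. -/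
def normSqn (n : ℕ) (v : Fin n → ℝ) : ℝ := (1 / (n : ℝ)) * ∑ i, (v i) ^ 2

/-- `A` is a `k`-NN matrix: entries in `{0, 1/k}`, diagonal entries `1/k`, rows summing to 1
(so each row has exactly `k` entries equal to `1/k`). -/
def IsKNN (n k : ℕ) (A : Matrix (Fin n) (Fin n) ℝ) : Prop :=
  (∀ i j, A i j = 0 ∨ A i j = 1 / (k : ℝ)) ∧
  (∀ i, A i i = 1 / (k : ℝ)) ∧
  (∀ i, ∑ j, A i j = 1)

/-- Every column of `A` has at most `γ * k` nonzero entries. -/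
def ColBound (n k : ℕ) (γ : ℝ) (A : Matrix (Fin n) (Fin n) ℝ) : Prop :=
  ∀ j, ((Finset.univ.filter fun i => A i j ≠ 0).card : ℝ) ≤ γ * k

/-- Squared bias `B²(k) = ‖(I - A_k) F*‖_n²`. -/
def bias2 (n : ℕ) (A : Matrix (Fin n) (Fin n) ℝ) (F : Fin n → ℝ) : ℝ :=
  normSqn n ((1 - A).mulVec F)

/-- Empirical risk `R_k = ‖(I - A_k) Y‖_n²` with `Y = F* + ε`. -/
def empRisk (n : ℕ) (A : Matrix (Fin n) (Fin n) ℝ) (F ε : Fin n → ℝ) : ℝ :=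
  normSqn n ((1 - A).mulVec (F + ε))

/-- Minimum discrepancy principle stopping rule `k^τ = sup {k ∈ {1,…,n} : R_k ≤ σ²}`. -/
def ktau (n : ℕ) (A : ℕ → Matrix (Fin n) (Fin n) ℝ) (F : Fin n → ℝ) (σ : ℝ)
    (ε : Fin n → ℝ) : ℕ :=
  sSup {k | k ∈ Set.Icc 1 n ∧ empRisk n (A k) F ε ≤ σ ^ 2}

/-- Bias-variance trade-off rule `k^* = inf {k ∈ {1,…,n} : B²(k) ≥ V(k)}`,
set to `n` when the set is empty. -/
def kstar (n : ℕ) (A : ℕ → Matrix (Fin n) (Fin n) ℝ) (F : Fin n → ℝ) (σ : ℝ) : ℕ :=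
  sInf ({k | k ∈ Set.Icc 1 n ∧ σ ^ 2 / (k : ℝ) ≤ bias2 n (A k) F} ∪ {n})

/-- The law of `ε = (ε₁,…,εₙ)` with i.i.d. `N(0,σ²)` coordinates. -/
def gaussPi (n : ℕ) (σ : ℝ) : Measure (Fin n → ℝ) :=
  Measure.pi fun _ => gaussianReal 0 (Real.toNNReal (σ ^ 2))

/-- The collection of `n+1` points `{x_1, …, x_n, x₀}` indexed by `Option (Fin n)`,
where `none ↦ x₀` and `some i ↦ x i`. -/
def extPts (d n : ℕ) (x : Fin n → EuclideanSpace ℝ (Fin d))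
    (x₀ : EuclideanSpace ℝ (Fin d)) : Option (Fin n) → EuclideanSpace ℝ (Fin d)
  | none => x₀
  | some i => x i


open RealInnerProductSpace in
lemma key_geo {E : Type*} [NormedAddCommGroup E] [InnerProductSpace ℝ E]
    (v w : E) (ha : 0 < ‖v‖) (hab : ‖v‖ ≤ ‖w‖)
    (huv : ‖‖v‖⁻¹ • v - ‖w‖⁻¹ • w‖ < 1) : ‖w - v‖ < ‖w‖ := by
  have hb : 0 < ‖w‖ := lt_of_lt_of_le ha hab
  have hu1 : ‖(‖v‖⁻¹ • v)‖ = 1 := by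
    rw [norm_smul, Real.norm_eq_abs, abs_inv, abs_norm, inv_mul_cancel₀ ha.ne']
  have hz1 : ‖(‖w‖⁻¹ • w)‖ = 1 := by
    rw [norm_smul, Real.norm_eq_abs, abs_inv, abs_norm, inv_mul_cancel₀ hb.ne']
  have h1 : ‖‖v‖⁻¹ • v - ‖w‖⁻¹ • w‖ ^ 2 =
      2 - 2 * (‖v‖⁻¹ * (‖w‖⁻¹ * ⟪v, w⟫)) := by
    rw [norm_sub_sq_real, hu1, hz1, real_inner_smul_left, real_inner_smul_right]
    ring
  have h2 : ‖‖v‖⁻¹ • v - ‖w‖⁻¹ • w‖ ^ 2 < 1 := by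
    nlinarith [norm_nonneg (‖v‖⁻¹ • v - ‖w‖⁻¹ • w)]
  have hin : ‖v‖⁻¹ * (‖w‖⁻¹ * ⟪v, w⟫) > 1 / 2 := by nlinarith [h1, h2]
  have hin2 : ⟪v, w⟫ > ‖v‖ * ‖w‖ / 2 := by
    have h3 : ‖v‖ * (‖w‖ * (‖v‖⁻¹ * (‖w‖⁻¹ * ⟪v, w⟫))) = ⟪v, w⟫ := by
      field_simp
    nlinarith [mul_pos ha hb]
  have h4 : ‖w - v‖ ^ 2 = ‖w‖ ^ 2 - 2 * ⟪v, w⟫ + ‖v‖ ^ 2 := by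
    rw [norm_sub_sq_real, real_inner_comm]
  have h5 : ‖w - v‖ ^ 2 < ‖w‖ ^ 2 := by nlinarith
  nlinarith [norm_nonneg (w - v)]


/-- for every dimension `d ≥ 1` there is a constant `γ_d > 0` such that,
for points with all pairwise distances distinct, the number of indices `i` such that `x₀`
is among the `k` nearest neighbors of `x_i` in `{x_1,…,x_{i-1}, x₀, x_{i+1},…,x_n}`
(i.e. at most `k-1` of the points `x_j`, `j ≠ i`, are strictly closer to `x_i` than `x₀`)
is at most `γ_d · k`. -/
theorem knn_count_bound (d : ℕ) (hd : 1 ≤ d) :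
    ∃ γ : ℝ, 0 < γ ∧
      ∀ (k n : ℕ), 1 ≤ k → 1 ≤ n →
      ∀ (x : Fin n → EuclideanSpace ℝ (Fin d)) (x₀ : EuclideanSpace ℝ (Fin d)),
        (∀ a b c e : Option (Fin n), a ≠ b → c ≠ e →
          dist (extPts d n x x₀ a) (extPts d n x x₀ b) =
            dist (extPts d n x x₀ c) (extPts d n x x₀ e) →
          (a = c ∧ b = e) ∨ (a = e ∧ b = c)) →
        ((Finset.univ.filter fun i : Fin n =>
            (Finset.univ.filter fun j : Fin n =>
              j ≠ i ∧ dist (x i) (x j) < dist (x i) x₀).card ≤ k - 1).card : ℝ) ≤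
          γ * k := by
  classical
  obtain ⟨T0, hT0fin, hT0cov⟩ := Metric.totallyBounded_iff.1
    (isCompact_sphere (0 : EuclideanSpace ℝ (Fin d)) 1).totallyBounded
    (1/2) (by norm_num)
  refine ⟨hT0fin.toFinset.card + 1, by positivity, ?_⟩
  set T : Finset (EuclideanSpace ℝ (Fin d)) := hT0fin.toFinset with hT
  intro k n hk hn x x₀ hties
  set bad : Finset (Fin n) := Finset.univ.filter (fun i : Fin n =>
    (Finset.univ.filter fun j : Fin n =>
      j ≠ i ∧ dist (x i) (x j) < dist (x i) x₀).card ≤ k - 1) with hbad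
  have hγk : (1 : ℝ) ≤ (T.card + 1 : ℝ) * k := by
    have : (1:ℝ) ≤ (k:ℝ) := by exact_mod_cast hk
    nlinarith [Nat.cast_nonneg (α := ℝ) T.card]
  by_cases hdeg : ∃ i, x i = x₀
  · obtain ⟨i0, hi0⟩ := hdeg
    have hall : ∀ j : Fin n, j = i0 := by
      intro j
      by_contra hj
      have hdd : dist (x j) (x i0) = dist (x j) x₀ := by rw [hi0]
      have := hties (some j) (some i0) (some j) none
        (by simpa using hj) (by simp) (by simpa [extPts] using hdd)
      simp at this
    have hsub : bad ⊆ {i0} := fun i _ => by simp [hall i]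
    have hcard : bad.card ≤ 1 := le_trans (Finset.card_le_card hsub) (by simp)
    calc (bad.card : ℝ) ≤ 1 := by exact_mod_cast hcard
      _ ≤ (T.card + 1 : ℝ) * k := hγk
  · push_neg at hdeg
    set u : Fin n → EuclideanSpace ℝ (Fin d) :=
      fun i => ‖x i - x₀‖⁻¹ • (x i - x₀) with hu
    have hxpos : ∀ i, 0 < ‖x i - x₀‖ := fun i => by
      simpa [norm_pos_iff, sub_ne_zero] using hdeg i
    have husph : ∀ i, u i ∈ Metric.sphere (0 : EuclideanSpace ℝ (Fin d)) 1 := by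
      intro i
      simp only [Metric.mem_sphere, dist_zero_right, hu, norm_smul,
        Real.norm_eq_abs, abs_inv, abs_norm]
      exact inv_mul_cancel₀ (hxpos i).ne'
    have hchoice : ∀ i, ∃ t, t ∈ T ∧ u i ∈ Metric.ball t (1/2) := by
      intro i
      have := hT0cov (husph i)
      simp only [Set.mem_iUnion] at this
      obtain ⟨t, ht, htb⟩ := this
      exact ⟨t, by simpa [hT] using ht, htb⟩
    choose c hcT hcb using hchoice
    have hdistinct : ∀ i j : Fin n, i ≠ j → dist (x i) x₀ ≠ dist (x j) x₀ := by
      intro i j hij h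
      have := hties (some i) none (some j) none (by simp) (by simp)
        (by simpa [extPts] using h)
      simp at this
      exact hij this
    have fiber : ∀ t ∈ bad.image c, (bad.filter fun i => c i = t).card ≤ k := by
      intro t _
      set F := bad.filter fun i => c i = t with hF
      rcases F.eq_empty_or_nonempty with hFe | hFne
      · simp [hFe]
      obtain ⟨j, hjF, hjmax⟩ := F.exists_max_image (fun i => dist (x i) x₀) hFne
      have hsub : F ⊆ insert j (Finset.univ.filter fun i : Fin n =>
          i ≠ j ∧ dist (x j) (x i) < dist (x j) x₀) := by
        intro i hiF
        by_cases hij : i = j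
        · simp [hij]
        refine Finset.mem_insert_of_mem ?_
        simp only [Finset.mem_filter, Finset.mem_univ, true_and]
        refine ⟨hij, ?_⟩
        have hle : dist (x i) x₀ ≤ dist (x j) x₀ := hjmax i hiF
        have hlt : ‖x i - x₀‖ ≤ ‖x j - x₀‖ := by
          rwa [dist_eq_norm, dist_eq_norm] at hle
        have hball : ‖u i - u j‖ < 1 := by
          have h1 : dist (u i) t < 1/2 := by
            have := hcb i
            rw [(Finset.mem_filter.1 hiF).2] at this
            simpa using this
          have h2 : dist (u j) t < 1/2 := by
            have := hcb j
            rw [(Finset.mem_filter.1 hjF).2] at this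
            simpa using this
          calc ‖u i - u j‖ = dist (u i) (u j) := (dist_eq_norm _ _).symm
            _ ≤ dist (u i) t + dist t (u j) := dist_triangle _ _ _
            _ < 1/2 + 1/2 := by rw [dist_comm t]; exact add_lt_add h1 h2
            _ = 1 := by norm_num
        have := key_geo (x i - x₀) (x j - x₀) (hxpos i) hlt hball
        rw [sub_sub_sub_cancel_right] at this
        rwa [dist_eq_norm, dist_eq_norm]
      have hjbad : j ∈ bad := (Finset.mem_filter.1 hjF).1
      have hjcnt : (Finset.univ.filter fun i : Fin n =>
          i ≠ j ∧ dist (x j) (x i) < dist (x j) x₀).card ≤ k - 1 :=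
        (Finset.mem_filter.1 hjbad).2
      have := Finset.card_le_card hsub
      have hins := Finset.card_insert_le j (Finset.univ.filter fun i : Fin n =>
          i ≠ j ∧ dist (x j) (x i) < dist (x j) x₀)
      omega
    have hmain : bad.card ≤ k * (bad.image c).card :=
      Finset.card_le_mul_card_image bad k fiber
    have himg : (bad.image c).card ≤ T.card :=
      Finset.card_le_card (fun t ht => by
        obtain ⟨i, _, rfl⟩ := Finset.mem_image.1 ht
        exact hcT i)
    have : bad.card ≤ k * T.card := le_trans hmain (Nat.mul_le_mul_left k himg)
    have h1 : (bad.card : ℝ) ≤ (k : ℝ) * T.card := by exact_mod_cast this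
    have hk1 : (0:ℝ) ≤ (k:ℝ) := Nat.cast_nonneg k
    nlinarith [Nat.cast_nonneg (α := ℝ) T.card]
end
end

section
/- Under the boundedness assumption |f*(x_i)| ≤ M for all i, there exists a positive constant c_d depending only on d (via γ_d) such that the following holds: for every y > 0 and every k ∈ {1,…,n} satisfying V(k) ≥ B²(k) + y, the minimum discrepancy stopping rule k^τ = sup{k' : R_{k'} ≤ σ²} satisfies P_ε( k^τ < k ) ≤ 2·exp( −c_d · n · min( y²/σ⁴, y/σ² ) ). -/
/-!
On `{k^τ < k}` the empirical risk `R_k = ‖(I - A_k)(F* + ε)‖_n²` exceeds `σ²`, whereas its mean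
`B²(k) + σ² tr((I - A_k)ᵀ(I - A_k)) / n = B²(k) + σ² (1 - 1/k)` is at most `σ² - y`. A Chernoff
bound controls this upward deviation of a Gaussian quadratic form: rotating `ε` into an eigenbasis
of `(I - A_k)ᵀ(I - A_k)` (the law of `ε` is rotation invariant) turns `E exp(t n R_k)` into a
product of one-dimensional integrals of `exp(a x² + b x)` against `N(0, σ²)`. The rows of
`|I - A_k|` sum to at most 2 and its columns to at most `1 + γ`, so by the Schur test
`2 (1 + γ)` bounds the squared operator norms of `I - A_k` and of its transpose, which control
the exponent. Optimising `t` gives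
`exp(-n y² / (32 (1 + γ) σ⁴))`, and `y ≤ σ²` makes `y²/σ⁴` the minimum in the statement.
-/

open MeasureTheory ProbabilityTheory Finset Matrix

noncomputable section

open scoped ENNReal NNReal

lemma Real.inv_sqrt_one_sub_le_exp {u : ℝ} (hu : u ≤ 1 / 2) :
    (√(1 - u))⁻¹ ≤ Real.exp (u / 2 + u ^ 2) := by
  have hd : 0 < 1 - u := by linarith
  rw [← Real.sqrt_inv, show u / 2 + u ^ 2 = (u + 2 * u ^ 2) / 2 by ring, Real.exp_half]
  have hpoly : (1 - u)⁻¹ ≤ 1 + (u + 2 * u ^ 2) := (inv_le_iff_one_le_mul₀ hd).2 <| by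
    nlinarith [mul_nonneg (sq_nonneg u) (by linarith : (0 : ℝ) ≤ 1 - 2 * u)]
  exact Real.sqrt_le_sqrt (hpoly.trans (by linarith [Real.add_one_le_exp (u + 2 * u ^ 2)]))

namespace ProbabilityTheory

lemma lintegral_exp_mul_gaussianReal (μ : ℝ) (v : ℝ≥0) (b : ℝ) :
    ∫⁻ x, ENNReal.ofReal (Real.exp (b * x)) ∂gaussianReal μ v =
      ENNReal.ofReal (Real.exp (μ * b + v * b ^ 2 / 2)) := by
  rw [← ofReal_integral_eq_lintegral_ofReal (integrable_exp_mul_gaussianReal b)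
    (ae_of_all _ fun _ => (Real.exp_pos _).le)]
  exact congrArg ENNReal.ofReal (congrFun mgf_id_gaussianReal b)

lemma gaussianPDFReal_mul_exp_sq {v : ℝ≥0} (hv : v ≠ 0) {a : ℝ} (ha : 2 * a * v < 1) (x : ℝ) :
    gaussianPDFReal 0 v x * Real.exp (a * x ^ 2) =
      (√(1 - 2 * a * v))⁻¹ * gaussianPDFReal 0 (Real.toNNReal (v / (1 - 2 * a * v))) x := by
  have hd : 0 < 1 - 2 * a * v := by linarith
  rw [gaussianPDFReal, gaussianPDFReal, Real.coe_toNNReal _ (by positivity), ← mul_assoc,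
    ← mul_inv, ← Real.sqrt_mul hd.le, mul_assoc, ← Real.exp_add]
  congr 2
  · congr 1
    field_simp
    exact (div_self (ne_of_gt (by linarith))).symm
  · field_simp
    ring

/-- The Gaussian factor `exp (a x²)` only changes the variance, to `v / (1 - 2 a v)`, so the
integral reduces to the moment generating function of that Gaussian. -/
lemma lintegral_exp_quadratic_gaussianReal {v : ℝ≥0} (hv : v ≠ 0) {a : ℝ} (ha : 2 * a * v < 1)
    (b : ℝ) :
    ∫⁻ x, ENNReal.ofReal (Real.exp (a * x ^ 2 + b * x)) ∂gaussianReal 0 v =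
      ENNReal.ofReal ((√(1 - 2 * a * v))⁻¹ * Real.exp (v * b ^ 2 / (2 * (1 - 2 * a * v)))) := by
  set v' := Real.toNNReal (v / (1 - 2 * a * v))
  have hv0 : (0 : ℝ) < v := by positivity
  have hd : 0 < 1 - 2 * a * v := by linarith
  have hv' : v' ≠ 0 := by simpa [v'] using div_pos hv0 hd
  have htilt : ∀ x, gaussianPDF 0 v x * ENNReal.ofReal (Real.exp (a * x ^ 2 + b * x)) =
      ENNReal.ofReal (√(1 - 2 * a * v))⁻¹ *
        (gaussianPDF 0 v' x * ENNReal.ofReal (Real.exp (b * x))) := by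
    intro x
    simp only [gaussianPDF, ← ENNReal.ofReal_mul (gaussianPDFReal_nonneg _ _ _),
      ← ENNReal.ofReal_mul (by positivity : (0 : ℝ) ≤ (√(1 - 2 * a * v))⁻¹), Real.exp_add,
      ← mul_assoc, gaussianPDFReal_mul_exp_sq hv ha]
    rfl
  have hwd := lintegral_withDensity_eq_lintegral_mul volume (measurable_gaussianPDF 0 v')
    (show Measurable fun x => ENNReal.ofReal (Real.exp (b * x)) by fun_prop)
  simp only [Pi.mul_apply] at hwd
  rw [gaussianReal_of_var_ne_zero _ hv, lintegral_withDensity_eq_lintegral_mul _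
    (measurable_gaussianPDF _ _) (by fun_prop)]
  simp only [Pi.mul_apply, htilt]
  rw [lintegral_const_mul' _ _ ENNReal.ofReal_ne_top, ← hwd,
    ← gaussianReal_of_var_ne_zero _ hv', lintegral_exp_mul_gaussianReal,
    ← ENNReal.ofReal_mul (by positivity)]
  congr 3
  simp only [v', Real.coe_toNNReal _ (div_pos hv0 hd).le]
  field_simp
  ring

lemma lintegral_exp_quadratic_gaussianReal_le (v : ℝ≥0) {a : ℝ} (hav : 4 * a * v ≤ 1) (b : ℝ) :
    ∫⁻ x, ENNReal.ofReal (Real.exp (a * x ^ 2 + b * x)) ∂gaussianReal 0 v ≤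
      ENNReal.ofReal (Real.exp (a * v + 4 * a ^ 2 * v ^ 2 + b ^ 2 * v)) := by
  rcases eq_or_ne v 0 with rfl | hv
  · simp
  have hu : 2 * a * v ≤ 1 / 2 := by linarith
  rw [lintegral_exp_quadratic_gaussianReal hv (by linarith)]
  refine ENNReal.ofReal_le_ofReal ?_
  rw [show a * v + 4 * a ^ 2 * v ^ 2 + b ^ 2 * v
      = (2 * a * v) / 2 + (2 * a * v) ^ 2 + b ^ 2 * v by ring, Real.exp_add]
  gcongr
  · exact Real.inv_sqrt_one_sub_le_exp hu
  · rw [div_le_iff₀ (by linarith)]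
    nlinarith [mul_nonneg (mul_nonneg (sq_nonneg b) v.coe_nonneg)
      (by linarith : (0 : ℝ) ≤ 1 - 4 * a * v)]

lemma prod_gaussianPDF_eq (v : ℝ≥0) {n : ℕ} (x : Fin n → ℝ) :
    ∏ i, gaussianPDF 0 v (x i) =
      ENNReal.ofReal ((√(2 * Real.pi * v))⁻¹ ^ n * Real.exp (-(x ⬝ᵥ x) / (2 * v))) := by
  simp only [gaussianPDF, gaussianPDFReal, sub_zero]
  rw [← ENNReal.ofReal_prod_of_nonneg fun i _ => by positivity, Finset.prod_mul_distrib,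
    Finset.prod_const, Finset.card_univ, Fintype.card_fin, ← Real.exp_sum, dotProduct,
    ← Finset.sum_div, ← Finset.sum_neg_distrib]
  simp only [sq]

end ProbabilityTheory

namespace MeasureTheory

variable {α : Type*} [MeasurableSpace α]

theorem lintegral_fin_nat_prod_eq_prod {m : ℕ} {μ : Fin m → Measure α}
    [∀ i, SigmaFinite (μ i)] {f : Fin m → α → ℝ≥0∞} (hf : ∀ i, Measurable (f i)) :
    ∫⁻ x, ∏ i, f i (x i) ∂Measure.pi μ = ∏ i, ∫⁻ x, f i x ∂μ i := by
  induction m with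
  | zero => simp
  | succ m ih =>
    have hprod : Measurable fun x : Fin (m + 1) → α => ∏ i, f i (x i) :=
      Finset.measurable_prod _ fun i _ => (hf i).comp (measurable_pi_apply i)
    calc ∫⁻ x, ∏ i, f i (x i) ∂Measure.pi μ
        = ∫⁻ x : α × (Fin m → α), f 0 x.1 * ∏ j : Fin m, f j.succ (x.2 j)
            ∂(μ 0).prod (Measure.pi fun j => μ j.succ) := by
          rw [← (measurePreserving_piFinSuccAbove μ 0).symm.lintegral_comp hprod]
          simp_rw [MeasurableEquiv.piFinSuccAbove_symm_apply, Fin.insertNthEquiv,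
            Fin.prod_univ_succ, Fin.insertNth_zero, Equiv.coe_fn_mk, Fin.cons_succ,
            Fin.zero_succAbove, cast_eq, Fin.cons_zero]
      _ = ∏ i, ∫⁻ x, f i x ∂μ i := by
          rw [lintegral_prod_mul (g := fun y : Fin m → α => ∏ j : Fin m, f j.succ (y j))
            (hf 0).aemeasurable (Finset.measurable_prod _ fun j _ =>
              (hf j.succ).comp (measurable_pi_apply j)).aemeasurable,
            ih fun j => hf j.succ, Fin.prod_univ_succ]

theorem Measure.pi_withDensity {m : ℕ} {μ : Fin m → Measure α} [∀ i, SigmaFinite (μ i)]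
    {f : Fin m → α → ℝ≥0∞} (hf : ∀ i, Measurable (f i))
    [∀ i, SigmaFinite ((μ i).withDensity (f i))] :
    Measure.pi (fun i => (μ i).withDensity (f i)) =
      (Measure.pi μ).withDensity fun x => ∏ i, f i (x i) := by
  refine Measure.pi_eq fun s hs => ?_
  rw [withDensity_apply _ (MeasurableSet.univ_pi hs), Measure.restrict_pi_pi,
    lintegral_fin_nat_prod_eq_prod hf]
  exact Finset.prod_congr rfl fun i _ => (withDensity_apply _ (hs i)).symm

lemma measure_le_le_exp_mul_lintegral_exp {Ω : Type*} [MeasurableSpace Ω] (μ : Measure Ω)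
    {X : Ω → ℝ} (hX : AEMeasurable X μ) {t : ℝ} (ht : 0 ≤ t) (a : ℝ) :
    μ {ω | a ≤ X ω} ≤
      ENNReal.ofReal (Real.exp (-(t * a))) * ∫⁻ ω, ENNReal.ofReal (Real.exp (t * X ω)) ∂μ := by
  have hmarkov := mul_meas_ge_le_lintegral₀ (μ := μ)
    (f := fun ω => ENNReal.ofReal (Real.exp (t * X ω))) (by fun_prop)
    (ENNReal.ofReal (Real.exp (t * a)))
  have hsub : {ω | a ≤ X ω} ⊆
      {ω | ENNReal.ofReal (Real.exp (t * a)) ≤ ENNReal.ofReal (Real.exp (t * X ω))} :=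
    fun ω hω => ENNReal.ofReal_le_ofReal (Real.exp_le_exp.2 (mul_le_mul_of_nonneg_left hω ht))
  calc μ {ω | a ≤ X ω}
      = ENNReal.ofReal (Real.exp (-(t * a))) * (ENNReal.ofReal (Real.exp (t * a)) *
          μ {ω | a ≤ X ω}) := by
        rw [← mul_assoc, ← ENNReal.ofReal_mul (Real.exp_pos _).le, ← Real.exp_add,
          neg_add_cancel, Real.exp_zero, ENNReal.ofReal_one, one_mul]
    _ ≤ _ := by
        gcongr
        exact (mul_le_mul_right (measure_mono hsub) _).trans hmarkov

end MeasureTheory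

namespace Matrix

lemma dotProduct_mulVec_self {m n : Type*} [Fintype m] [Fintype n] (C : Matrix m n ℝ)
    (x : n → ℝ) : (C *ᵥ x) ⬝ᵥ (C *ᵥ x) = x ⬝ᵥ ((Cᵀ * C) *ᵥ x) := by
  rw [dotProduct_mulVec, ← mulVec_transpose, mulVec_mulVec, dotProduct_comm]

lemma dotProduct_mulVec_self_of_mem_orthogonalGroup {n : Type*} [Fintype n] [DecidableEq n]
    {U : Matrix n n ℝ} (hU : U ∈ orthogonalGroup n ℝ) (x : n → ℝ) :
    (U *ᵥ x) ⬝ᵥ (U *ᵥ x) = x ⬝ᵥ x := by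
  rw [dotProduct_mulVec_self, (mem_orthogonalGroup_iff' _ _).1 hU, one_mulVec]

lemma trace_transpose_mul_self_mul_of_mem_orthogonalGroup {n : Type*} [Fintype n] [DecidableEq n]
    (B : Matrix n n ℝ) {U : Matrix n n ℝ} (hU : U ∈ orthogonalGroup n ℝ) :
    trace ((B * U)ᵀ * (B * U)) = trace (Bᵀ * B) := by
  rw [transpose_mul, Matrix.mul_assoc, trace_mul_comm, Matrix.mul_assoc, Matrix.mul_assoc,
    (mem_orthogonalGroup_iff _ _).1 hU, Matrix.mul_one]

lemma dotProduct_add_mulVec_self_of_transpose_mul_self_eq_diagonal {n : Type*} [Fintype n]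
    [DecidableEq n] {C : Matrix n n ℝ} {d : n → ℝ} (hC : Cᵀ * C = diagonal d) (μ x : n → ℝ) :
    (μ + C *ᵥ x) ⬝ᵥ (μ + C *ᵥ x) = μ ⬝ᵥ μ + ∑ i, (d i * x i ^ 2 + 2 * (Cᵀ *ᵥ μ) i * x i) := by
  have hcross : μ ⬝ᵥ (C *ᵥ x) = (Cᵀ *ᵥ μ) ⬝ᵥ x := by
    rw [dotProduct_mulVec, mulVec_transpose]
  rw [add_dotProduct, dotProduct_add, dotProduct_add, dotProduct_comm (C *ᵥ x) μ, hcross,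
    dotProduct_mulVec_self, hC, Finset.sum_add_distrib]
  simp only [dotProduct, mulVec_diagonal, ← Finset.sum_add_distrib]
  exact Finset.sum_congr rfl fun i _ => by ring

/-- The Schur test. -/
lemma dotProduct_mulVec_self_le_of_sum_abs_le {m n : Type*} [Fintype m] [Fintype n]
    (B : Matrix m n ℝ) {r c : ℝ} (hr0 : 0 ≤ r) (hr : ∀ i, ∑ j, |B i j| ≤ r)
    (hc : ∀ j, ∑ i, |B i j| ≤ c) (x : n → ℝ) :
    (B *ᵥ x) ⬝ᵥ (B *ᵥ x) ≤ r * c * (x ⬝ᵥ x) := by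
  have hrow : ∀ i, (B *ᵥ x) i * (B *ᵥ x) i ≤ r * ∑ j, |B i j| * x j ^ 2 := fun i => by
    rw [← sq]
    refine (Finset.sum_sq_le_sum_mul_sum_of_sq_le_mul _ (fun j _ => abs_nonneg (B i j))
      (fun j _ => by positivity) fun j _ => ?_).trans
      (mul_le_mul_of_nonneg_right (hr i) (by positivity))
    rw [mul_pow, ← mul_assoc, ← sq, sq_abs]
  calc (B *ᵥ x) ⬝ᵥ (B *ᵥ x) ≤ ∑ i, r * ∑ j, |B i j| * x j ^ 2 :=
        Finset.sum_le_sum fun i _ => hrow i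
    _ = r * ∑ j, x j ^ 2 * ∑ i, |B i j| := by
      rw [← Finset.mul_sum, Finset.sum_comm]
      simp only [Finset.mul_sum, mul_comm]
    _ ≤ r * ∑ j, x j ^ 2 * c :=
      mul_le_mul_of_nonneg_left (Finset.sum_le_sum fun j _ =>
        mul_le_mul_of_nonneg_left (hc j) (sq_nonneg _)) hr0
    _ = r * c * (x ⬝ᵥ x) := by
      simp only [dotProduct, ← Finset.sum_mul, sq]
      ring

lemma exists_orthogonal_transpose_mul_self_eq_diagonal {n : Type*} [Fintype n] [DecidableEq n]
    (B : Matrix n n ℝ) {L : ℝ} (hB : ∀ x, (B *ᵥ x) ⬝ᵥ (B *ᵥ x) ≤ L * (x ⬝ᵥ x)) :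
    ∃ U ∈ orthogonalGroup n ℝ, ∃ d : n → ℝ,
      (B * U)ᵀ * (B * U) = diagonal d ∧ ∀ i, 0 ≤ d i ∧ d i ≤ L := by
  have hM : (Bᵀ * B).IsHermitian := by
    simpa [conjTranspose_eq_transpose_of_trivial] using isHermitian_conjTranspose_mul_self B
  set U : Matrix n n ℝ := (hM.eigenvectorUnitary : Matrix n n ℝ)
  have hU : U ∈ orthogonalGroup n ℝ := hM.eigenvectorUnitary.2
  have hdiag : (B * U)ᵀ * (B * U) = diagonal hM.eigenvalues := by
    have h := hM.conjStarAlgAut_star_eigenvectorUnitary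
    rw [Unitary.conjStarAlgAut_star_apply] at h
    simpa [star_eq_conjTranspose, conjTranspose_eq_transpose_of_trivial, transpose_mul,
      Matrix.mul_assoc] using h
  refine ⟨U, hU, hM.eigenvalues, hdiag, fun i => ?_⟩
  set e : n → ℝ := Pi.single i 1
  have hd : hM.eigenvalues i = (B *ᵥ (U *ᵥ e)) ⬝ᵥ (B *ᵥ (U *ᵥ e)) := by
    rw [mulVec_mulVec, dotProduct_mulVec_self, hdiag]
    simp [e]
  have hUe : (U *ᵥ e) ⬝ᵥ (U *ᵥ e) = 1 := by
    rw [dotProduct_mulVec_self_of_mem_orthogonalGroup hU]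
    simp [e]
  refine ⟨hd ▸ Finset.sum_nonneg fun _ _ => mul_self_nonneg _, ?_⟩
  simpa [hd, hUe] using hB (U *ᵥ e)

lemma abs_det_of_mem_orthogonalGroup {n : Type*} [Fintype n] [DecidableEq n] {U : Matrix n n ℝ}
    (hU : U ∈ orthogonalGroup n ℝ) : |U.det| = 1 := by
  simpa using CStarRing.norm_of_mem_unitary (det_of_mem_unitary hU)

lemma measurePreserving_mulVec_volume {n : ℕ} {U : Matrix (Fin n) (Fin n) ℝ}
    (hU : U ∈ orthogonalGroup (Fin n) ℝ) : MeasurePreserving (U *ᵥ ·) volume volume := by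
  refine ⟨by fun_prop, ?_⟩
  have := Real.map_matrix_volume_pi_eq_smul_volume_pi (M := U) fun h => by
    simpa [h] using abs_det_of_mem_orthogonalGroup hU
  rwa [show ⇑(toLin' U) = (U *ᵥ ·) from funext (toLin'_apply U), abs_inv,
    abs_det_of_mem_orthogonalGroup hU, inv_one, ENNReal.ofReal_one, one_smul] at this

end Matrix

lemma gaussPi_eq_withDensity {n : ℕ} {σ : ℝ} (hσ : σ ≠ 0) :
    gaussPi n σ =
      volume.withDensity fun x => ∏ i, gaussianPDF 0 (Real.toNNReal (σ ^ 2)) (x i) := by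
  have hv : Real.toNNReal (σ ^ 2) ≠ 0 := by simpa using hσ
  have : IsProbabilityMeasure (volume.withDensity (gaussianPDF 0 (Real.toNNReal (σ ^ 2)))) := by
    rw [← gaussianReal_of_var_ne_zero _ hv]; infer_instance
  rw [gaussPi, volume_pi, ← Measure.pi_withDensity fun _ => measurable_gaussianPDF _ _]
  simp_rw [gaussianReal_of_var_ne_zero _ hv]

/-- The density of `gaussPi n σ` depends on `x` only through `x ⬝ᵥ x`, and orthogonal maps
preserve both `x ⬝ᵥ x` and Lebesgue measure. -/
lemma measurePreserving_mulVec_gaussPi {n : ℕ} {σ : ℝ} (hσ : σ ≠ 0)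
    {U : Matrix (Fin n) (Fin n) ℝ} (hU : U ∈ orthogonalGroup (Fin n) ℝ) :
    MeasurePreserving (U *ᵥ ·) (gaussPi n σ) (gaussPi n σ) := by
  have hvol := measurePreserving_mulVec_volume hU
  have hD : Measurable fun x : Fin n → ℝ => ∏ i, gaussianPDF 0 (Real.toNNReal (σ ^ 2)) (x i) :=
    Finset.measurable_prod _ fun i _ => (measurable_gaussianPDF _ _).comp (measurable_pi_apply i)
  refine ⟨hvol.measurable, ?_⟩
  ext s hs
  rw [Measure.map_apply hvol.measurable hs, gaussPi_eq_withDensity hσ, withDensity_apply _ hs,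
    withDensity_apply _ (hvol.measurable hs), ← hvol.setLIntegral_comp_preimage hs hD]
  simp only [prod_gaussianPDF_eq, dotProduct_mulVec_self_of_mem_orthogonalGroup hU]

lemma lintegral_prod_exp_quadratic_gaussPi_le {n : ℕ} (σ : ℝ) {a : Fin n → ℝ} (b : Fin n → ℝ)
    (ha : ∀ i, 4 * a i * σ ^ 2 ≤ 1) :
    ∫⁻ x, ∏ i, ENNReal.ofReal (Real.exp (a i * x i ^ 2 + b i * x i)) ∂gaussPi n σ ≤
      ENNReal.ofReal (Real.exp (∑ i, (a i * σ ^ 2 + 4 * a i ^ 2 * σ ^ 4 + b i ^ 2 * σ ^ 2))) := by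
  have hv : ((Real.toNNReal (σ ^ 2) : ℝ≥0) : ℝ) = σ ^ 2 := Real.coe_toNNReal _ (sq_nonneg σ)
  rw [gaussPi, lintegral_fin_nat_prod_eq_prod
    (f := fun i z => ENNReal.ofReal (Real.exp (a i * z ^ 2 + b i * z))) fun i => by fun_prop,
    Real.exp_sum, ENNReal.ofReal_prod_of_nonneg fun i _ => (Real.exp_pos _).le]
  refine Finset.prod_le_prod' fun i _ => ?_
  refine (lintegral_exp_quadratic_gaussianReal_le _ (a := a i) (by rw [hv]; exact ha i)
    (b i)).trans_eq ?_
  rw [hv]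
  congr 2
  ring

theorem lintegral_exp_dotProduct_self_gaussPi_le {n : ℕ} {σ L t : ℝ} (hσ : σ ≠ 0)
    (B : Matrix (Fin n) (Fin n) ℝ) (μ : Fin n → ℝ)
    (hB : ∀ x, (B *ᵥ x) ⬝ᵥ (B *ᵥ x) ≤ L * (x ⬝ᵥ x))
    (hBt : ∀ x, (Bᵀ *ᵥ x) ⬝ᵥ (Bᵀ *ᵥ x) ≤ L * (x ⬝ᵥ x)) (ht : 0 ≤ t)
    (htL : 4 * t * L * σ ^ 2 ≤ 1) :
    ∫⁻ ε, ENNReal.ofReal (Real.exp (t * ((μ + B *ᵥ ε) ⬝ᵥ (μ + B *ᵥ ε)))) ∂gaussPi n σ ≤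
      ENNReal.ofReal (Real.exp (t * (μ ⬝ᵥ μ + σ ^ 2 * trace (Bᵀ * B)) +
        4 * t ^ 2 * σ ^ 2 * L * (μ ⬝ᵥ μ + σ ^ 2 * trace (Bᵀ * B)))) := by
  obtain ⟨U, hU, d, hdiag, hd⟩ := exists_orthogonal_transpose_mul_self_eq_diagonal B hB
  set w := (B * U)ᵀ *ᵥ μ
  have htrace : ∑ i, d i = trace (Bᵀ * B) := by
    rw [← trace_diagonal, ← hdiag, trace_transpose_mul_self_mul_of_mem_orthogonalGroup B hU]
  have hw : w ⬝ᵥ w ≤ L * (μ ⬝ᵥ μ) := by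
    rw [show w = Uᵀ *ᵥ (Bᵀ *ᵥ μ) by rw [mulVec_mulVec, ← transpose_mul],
      dotProduct_mulVec_self_of_mem_orthogonalGroup (transpose_mem_unitaryGroup_iff.2 hU)]
    exact hBt μ
  have hrot : ∀ x, Real.exp (t * ((μ + B *ᵥ (U *ᵥ x)) ⬝ᵥ (μ + B *ᵥ (U *ᵥ x)))) =
      Real.exp (t * (μ ⬝ᵥ μ)) * ∏ i, Real.exp (t * d i * x i ^ 2 + 2 * t * w i * x i) := by
    intro x
    rw [mulVec_mulVec, dotProduct_add_mulVec_self_of_transpose_mul_self_eq_diagonal hdiag,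
      ← Real.exp_sum, ← Real.exp_add, mul_add, Finset.mul_sum]
    congr 2
    exact Finset.sum_congr rfl fun i _ => by ring
  have hfactor : ∀ i, 4 * (t * d i) * σ ^ 2 ≤ 1 := fun i => by
    linarith [mul_le_mul_of_nonneg_left (hd i).2 (by positivity : (0 : ℝ) ≤ 4 * t * σ ^ 2)]
  have hsq : ∑ i, d i ^ 2 ≤ L * trace (Bᵀ * B) := by
    rw [← htrace, Finset.mul_sum]
    exact Finset.sum_le_sum fun i _ => by nlinarith [hd i]
  calc ∫⁻ ε, ENNReal.ofReal (Real.exp (t * ((μ + B *ᵥ ε) ⬝ᵥ (μ + B *ᵥ ε)))) ∂gaussPi n σ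
      = ENNReal.ofReal (Real.exp (t * (μ ⬝ᵥ μ))) * ∫⁻ x,
          ∏ i, ENNReal.ofReal (Real.exp (t * d i * x i ^ 2 + 2 * t * w i * x i))
            ∂gaussPi n σ := by
        rw [← (measurePreserving_mulVec_gaussPi hσ hU).lintegral_comp (by fun_prop),
          ← lintegral_const_mul' _ _ ENNReal.ofReal_ne_top]
        simp only [hrot, ENNReal.ofReal_mul (Real.exp_pos _).le,
          ENNReal.ofReal_prod_of_nonneg fun i _ => (Real.exp_pos _).le]
    _ ≤ ENNReal.ofReal (Real.exp (t * (μ ⬝ᵥ μ))) * ENNReal.ofReal (Real.exp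
          (∑ i, (t * d i * σ ^ 2 + 4 * (t * d i) ^ 2 * σ ^ 4 + (2 * t * w i) ^ 2 * σ ^ 2))) := by
        gcongr
        exact lintegral_prod_exp_quadratic_gaussPi_le σ _ hfactor
    _ = ENNReal.ofReal (Real.exp (t * (μ ⬝ᵥ μ) + t * σ ^ 2 * trace (Bᵀ * B) +
          4 * t ^ 2 * σ ^ 4 * ∑ i, d i ^ 2 + 4 * t ^ 2 * σ ^ 2 * (w ⬝ᵥ w))) := by
        rw [← ENNReal.ofReal_mul (Real.exp_pos _).le, ← Real.exp_add, ← htrace]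
        simp only [dotProduct, Finset.mul_sum, ← Finset.sum_add_distrib, add_assoc]
        congr 3 with i
        ring
    _ ≤ _ := by
        refine ENNReal.ofReal_le_ofReal (Real.exp_le_exp.2 ?_)
        nlinarith [mul_le_mul_of_nonneg_left hsq (by positivity : (0 : ℝ) ≤ 4 * t ^ 2 * σ ^ 4),
          mul_le_mul_of_nonneg_left hw (by positivity : (0 : ℝ) ≤ 4 * t ^ 2 * σ ^ 2)]

theorem gaussPi_add_le_dotProduct_add_mulVec_self_le {n : ℕ} {σ L t m δ : ℝ} (hσ : σ ≠ 0)
    (B : Matrix (Fin n) (Fin n) ℝ) (μ : Fin n → ℝ)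
    (hB : ∀ x, (B *ᵥ x) ⬝ᵥ (B *ᵥ x) ≤ L * (x ⬝ᵥ x))
    (hBt : ∀ x, (Bᵀ *ᵥ x) ⬝ᵥ (Bᵀ *ᵥ x) ≤ L * (x ⬝ᵥ x)) (hL : 0 ≤ L) (ht : 0 ≤ t)
    (htL : 4 * t * L * σ ^ 2 ≤ 1) (hm : μ ⬝ᵥ μ + σ ^ 2 * trace (Bᵀ * B) ≤ m) :
    gaussPi n σ {ε | m + δ ≤ (μ + B *ᵥ ε) ⬝ᵥ (μ + B *ᵥ ε)} ≤
      ENNReal.ofReal (Real.exp (-(t * δ) + 4 * t ^ 2 * σ ^ 2 * L * m)) := by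
  refine (measure_le_le_exp_mul_lintegral_exp _ (by fun_prop) ht _).trans ?_
  grw [lintegral_exp_dotProduct_self_gaussPi_le hσ B μ hB hBt ht htL,
    ← ENNReal.ofReal_mul (Real.exp_pos _).le, ← Real.exp_add]
  refine ENNReal.ofReal_le_ofReal (Real.exp_le_exp.2 ?_)
  nlinarith [mul_le_mul_of_nonneg_left hm ht,
    mul_le_mul_of_nonneg_left hm (by positivity : (0 : ℝ) ≤ 4 * t ^ 2 * σ ^ 2 * L)]

lemma mul_normSqn (n : ℕ) (v : Fin n → ℝ) : n * normSqn n v = v ⬝ᵥ v := by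
  rcases n.eq_zero_or_pos with rfl | hn
  · simp [normSqn]
  · simp only [normSqn, dotProduct, sq]
    field_simp

namespace IsKNN

variable {n k : ℕ} {A : Matrix (Fin n) (Fin n) ℝ}

lemma nonneg (hA : IsKNN n k A) (i j : Fin n) : 0 ≤ A i j := by
  rcases hA.1 i j with h | h <;> simp [h]

lemma abs_one_sub_apply_le (hA : IsKNN n k A) (i j : Fin n) :
    |(1 - A) i j| ≤ (1 : Matrix (Fin n) (Fin n) ℝ) i j + A i j := by
  have hone : 0 ≤ (1 : Matrix (Fin n) (Fin n) ℝ) i j := by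
    rw [one_apply]
    split_ifs <;> norm_num
  exact (abs_sub _ _).trans_eq (by rw [abs_of_nonneg hone, abs_of_nonneg (hA.nonneg i j)])

lemma sum_abs_one_sub_row_le (hA : IsKNN n k A) (i : Fin n) : ∑ j, |(1 - A) i j| ≤ 2 := by
  calc ∑ j, |(1 - A) i j| ≤ ∑ j, ((1 : Matrix (Fin n) (Fin n) ℝ) i j + A i j) :=
        Finset.sum_le_sum fun j _ => hA.abs_one_sub_apply_le i j
    _ = 2 := by rw [Finset.sum_add_distrib, hA.2.2 i]; simp [one_apply]; norm_num

lemma sum_col_le {γ : ℝ} (hA : IsKNN n k A) (hcol : ColBound n k γ A) (hk : 0 < k) (j : Fin n) :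
    ∑ i, A i j ≤ γ := by
  have hval : ∀ i ∈ Finset.univ.filter fun i => A i j ≠ 0, A i j = 1 / (k : ℝ) := fun i hi =>
    (hA.1 i j).resolve_left (Finset.mem_filter.1 hi).2
  rw [← Finset.sum_filter_ne_zero, Finset.sum_congr rfl hval, Finset.sum_const, nsmul_eq_mul]
  calc _ ≤ γ * k * (1 / (k : ℝ)) := mul_le_mul_of_nonneg_right (hcol j) (by positivity)
    _ = γ := by field_simp

lemma sum_abs_one_sub_col_le {γ : ℝ} (hA : IsKNN n k A) (hcol : ColBound n k γ A) (hk : 0 < k)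
    (j : Fin n) : ∑ i, |(1 - A) i j| ≤ 1 + γ := by
  calc ∑ i, |(1 - A) i j| ≤ ∑ i, ((1 : Matrix (Fin n) (Fin n) ℝ) i j + A i j) :=
        Finset.sum_le_sum fun i _ => hA.abs_one_sub_apply_le i j
    _ ≤ 1 + γ := by
      rw [Finset.sum_add_distrib]
      simp only [one_apply, Finset.sum_ite_eq', Finset.mem_univ, if_true]
      linarith [hA.sum_col_le hcol hk j]

lemma dotProduct_one_sub_mulVec_le {γ : ℝ} (hA : IsKNN n k A) (hcol : ColBound n k γ A)
    (hk : 0 < k) (x : Fin n → ℝ) :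
    ((1 - A) *ᵥ x) ⬝ᵥ ((1 - A) *ᵥ x) ≤ 2 * (1 + γ) * (x ⬝ᵥ x) :=
  dotProduct_mulVec_self_le_of_sum_abs_le _ zero_le_two hA.sum_abs_one_sub_row_le
    (hA.sum_abs_one_sub_col_le hcol hk) x

lemma dotProduct_transpose_one_sub_mulVec_le {γ : ℝ} (hA : IsKNN n k A)
    (hcol : ColBound n k γ A) (hk : 0 < k) (hγ : 0 ≤ γ) (x : Fin n → ℝ) :
    ((1 - A)ᵀ *ᵥ x) ⬝ᵥ ((1 - A)ᵀ *ᵥ x) ≤ 2 * (1 + γ) * (x ⬝ᵥ x) :=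
  (dotProduct_mulVec_self_le_of_sum_abs_le _ (by linarith) (hA.sum_abs_one_sub_col_le hcol hk)
    hA.sum_abs_one_sub_row_le x).trans_eq (by ring)

lemma sum_sq_one_sub_row (hA : IsKNN n k A) (i : Fin n) :
    ∑ j, (1 - A) i j ^ 2 = 1 - 1 / k := by
  have hsq : ∀ j, (1 - A) i j ^ 2 =
      (1 : Matrix (Fin n) (Fin n) ℝ) i j * (1 - 2 / k) + A i j / k := by
    intro j
    rcases eq_or_ne i j with rfl | hij
    · simp only [Matrix.sub_apply, one_apply_eq, hA.2.1 i]
      ring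
    · simp only [Matrix.sub_apply, one_apply_ne hij]
      rcases hA.1 i j with h | h <;> rw [h] <;> ring
  simp only [hsq, Finset.sum_add_distrib, ← Finset.sum_div, hA.2.2 i, one_apply, ite_mul,
    one_mul, zero_mul, Finset.sum_ite_eq, Finset.mem_univ, if_true]
  ring

lemma trace_transpose_mul_one_sub (hA : IsKNN n k A) :
    trace ((1 - A)ᵀ * (1 - A)) = (n : ℝ) * (1 - 1 / k) := by
  simp only [trace, diag_apply, mul_apply, transpose_apply, ← sq]
  rw [Finset.sum_comm, Finset.sum_congr rfl fun i _ => hA.sum_sq_one_sub_row i]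
  simp [mul_sub]

end IsKNN

lemma le_sq_of_bias2_add_le {n k : ℕ} {A : Matrix (Fin n) (Fin n) ℝ} {F : Fin n → ℝ} {σ y : ℝ}
    (hk : 0 < k) (hbias : bias2 n A F + y ≤ σ ^ 2 / k) : y ≤ σ ^ 2 := by
  have hbias0 : 0 ≤ bias2 n A F := by unfold bias2 normSqn; positivity
  have := div_le_self (sq_nonneg σ) (by exact_mod_cast hk : (1 : ℝ) ≤ k)
  linarith

lemma sq_lt_empRisk_of_ktau_lt {n k : ℕ} {A : ℕ → Matrix (Fin n) (Fin n) ℝ} {F ε : Fin n → ℝ}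
    {σ : ℝ} (hk : k ∈ Set.Icc 1 n) (hτ : ktau n A F σ ε < k) : σ ^ 2 < empRisk n (A k) F ε := by
  by_contra! hR
  have hbdd : BddAbove {k' | k' ∈ Set.Icc 1 n ∧ empRisk n (A k') F ε ≤ σ ^ 2} :=
    ⟨n, fun _ hk' => hk'.1.2⟩
  exact hτ.not_ge (le_csSup hbdd ⟨hk, hR⟩)

theorem gaussPi_sq_lt_empRisk_le {n k : ℕ} {γ σ y : ℝ} {A : Matrix (Fin n) (Fin n) ℝ}
    {F : Fin n → ℝ} (hk : 0 < k) (hA : IsKNN n k A) (hcol : ColBound n k γ A) (hγ : 0 ≤ γ)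
    (hσ : σ ≠ 0) (hy : 0 ≤ y) (hbias : bias2 n A F + y ≤ σ ^ 2 / k) :
    gaussPi n σ {ε | σ ^ 2 < empRisk n A F ε} ≤
      ENNReal.ofReal (Real.exp (-(n * y ^ 2) / (32 * (1 + γ) * σ ^ 4))) := by
  set B := 1 - A
  set L := 2 * (1 + γ)
  -- minimises `-t n y + 4 t² σ⁴ L n`
  set t := y / (8 * L * σ ^ 4)
  have hL : 0 < L := by positivity
  have hmean : (B *ᵥ F) ⬝ᵥ (B *ᵥ F) + σ ^ 2 * trace (Bᵀ * B) ≤ n * σ ^ 2 - n * y := by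
    rw [← mul_normSqn, ← bias2, hA.trace_transpose_mul_one_sub]
    have := mul_le_mul_of_nonneg_left hbias (Nat.cast_nonneg n)
    field_simp at this ⊢
    nlinarith
  have hevent : {ε | σ ^ 2 < empRisk n A F ε} ⊆
      {ε | (n * σ ^ 2 - n * y) + n * y ≤ (B *ᵥ F + B *ᵥ ε) ⬝ᵥ (B *ᵥ F + B *ᵥ ε)} :=
    fun ε hε => by
      rw [Set.mem_ofPred_eq, sub_add_cancel, ← mulVec_add, ← mul_normSqn]
      exact mul_le_mul_of_nonneg_left (le_of_lt hε) (Nat.cast_nonneg n)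
  have htL : 4 * t * L * σ ^ 2 ≤ 1 := by
    rw [show 4 * t * L * σ ^ 2 = y / (2 * σ ^ 2) by simp only [t]; field_simp; ring,
      div_le_one (by positivity)]
    linarith [le_sq_of_bias2_add_le hk hbias]
  refine (measure_mono hevent).trans <|
    (gaussPi_add_le_dotProduct_add_mulVec_self_le hσ B _ (hA.dotProduct_one_sub_mulVec_le hcol hk)
      (hA.dotProduct_transpose_one_sub_mulVec_le hcol hk hγ) hL.le (by positivity) htL
      hmean).trans (ENNReal.ofReal_le_ofReal (Real.exp_le_exp.2 ?_))
  have hopt : -(t * (n * y)) + 4 * t ^ 2 * σ ^ 2 * L * (n * σ ^ 2) =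
      -(n * y ^ 2) / (32 * (1 + γ) * σ ^ 4) := by
    simp only [t, L]
    field_simp
    ring
  nlinarith [mul_nonneg (by positivity : (0 : ℝ) ≤ 4 * t ^ 2 * σ ^ 2 * L)
    (by positivity : (0 : ℝ) ≤ n * y)]

/-- for `k` with `V(k) ≥ B²(k) + y`, the minimum discrepancy rule rarely
stops before `k`: `P(k^τ < k) ≤ 2 exp(−c_d n min(y²/σ⁴, y/σ²))`, with `c_d` depending
only on `d` (via `γ_d`). -/
theorem ktau_deviation_variance_side (γ : ℝ) (hγ : 0 < γ) :
    ∃ cd : ℝ, 0 < cd ∧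
      ∀ (n : ℕ), 1 ≤ n →
      ∀ (σ M : ℝ), 0 < σ → 0 < M →
      ∀ A : ℕ → Matrix (Fin n) (Fin n) ℝ,
        (∀ k ∈ Set.Icc 1 n, IsKNN n k (A k) ∧ ColBound n k γ (A k)) →
      ∀ F : Fin n → ℝ, (∀ i, |F i| ≤ M) →
      ∀ y : ℝ, 0 ≤ y →
      ∀ k ∈ Set.Icc 1 n, bias2 n (A k) F + y ≤ σ ^ 2 / (k : ℝ) →
        gaussPi n σ {ε : Fin n → ℝ | ktau n A F σ ε < k} ≤
          ENNReal.ofReal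
            (2 * Real.exp (-cd * n * min (y ^ 2 / σ ^ 4) (y / σ ^ 2))) := by
  refine ⟨1 / (32 * (1 + γ)), by positivity, ?_⟩
  intro n _ σ M hσ _ A hA F _ y hy k hk hbias
  obtain ⟨hknn, hcol⟩ := hA k hk
  have hyσ : y / σ ^ 2 ≤ 1 := div_le_one_of_le₀ (le_sq_of_bias2_add_le hk.1 hbias) (sq_nonneg σ)
  have hmin : min (y ^ 2 / σ ^ 4) (y / σ ^ 2) = y ^ 2 / σ ^ 4 := by
    refine min_eq_left ?_
    rw [show y ^ 2 / σ ^ 4 = (y / σ ^ 2) ^ 2 by ring]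
    exact pow_le_of_le_one (by positivity) hyσ two_ne_zero
  calc gaussPi n σ {ε | ktau n A F σ ε < k}
      ≤ gaussPi n σ {ε | σ ^ 2 < empRisk n (A k) F ε} :=
        measure_mono fun _ => sq_lt_empRisk_of_ktau_lt hk
    _ ≤ ENNReal.ofReal (Real.exp (-(n * y ^ 2) / (32 * (1 + γ) * σ ^ 4))) :=
        gaussPi_sq_lt_empRisk_le hk.1 hknn hcol hγ.le hσ.ne' hy hbias
    _ ≤ _ := by
        rw [hmin, show -(1 / (32 * (1 + γ))) * n * (y ^ 2 / σ ^ 4) =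
          -(n * y ^ 2) / (32 * (1 + γ) * σ ^ 4) by field_simp]
        exact ENNReal.ofReal_le_ofReal (by linarith [Real.exp_pos (-(n * y ^ 2) / (32 * (1 + γ) * σ ^ 4))])
end
end
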